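/- Fix a real number λ, a nonnegative integer r, and a real number x. For each k ≥ 0 let F_{k,λ}(x|r) = Σ_{j=0}^{k} x^j · j! · {k+r, j+r}_{r,λ} (the degenerate two variable Fubini polynomial evaluated at (x, r)). Then for every n ≥ 0, x^n · n! = Σ_{k=0}^{n} (−1)^{n−k} [n+r, k+r]_{r,λ} F_{k,λ}(x|r). -/

import Mathlib

open Finset

/-- The degenerate falling factorial `(x)_{n,λ} = x(x-λ)(x-2λ)⋯(x-(n-1)λ)`. -/
noncomputable def degFall (lam x : ℝ) (n : ℕ) : ℝ := ∏ i ∈ Finset.range n, (x - i * lam)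

/-- The degenerate rising factorial `⟨x⟩_{n,λ} = x(x+λ)(x+2λ)⋯(x+(n-1)λ)`. -/
noncomputable def degRise (lam x : ℝ) (n : ℕ) : ℝ := ∏ i ∈ Finset.range n, (x + i * lam)

/-!
Substituting `y = -(z + r)` in the expansion defining `S1` turns degenerate rising factorials into
degenerate falling factorials, which `S2` expands in ordinary falling factorials; hence
`(z)_n = ∑_j (∑_k (-1)^(n-k) S1 n k S2 k j) (z)_j`. Ordinary falling factorials are linearly
independent (evaluate at `z = 0, 1, 2, …`), so the inner sum is the Kronecker delta, and the
theorem is this orthogonality relation summed against `x^j j!`.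
-/

section

variable {lam : ℝ} {r : ℕ} {S1 S2 : ℕ → ℕ → ℝ}

theorem degRise_neg (c z : ℝ) (n : ℕ) : degRise c (-z) n = (-1) ^ n * degFall c z n := by
  rw [degRise, degFall, show (-1 : ℝ) ^ n = ∏ _i ∈ range n, (-1 : ℝ) by simp,
    ← prod_mul_distrib]
  exact prod_congr rfl fun i _ => by ring

theorem degFall_one_natCast (m j : ℕ) : degFall 1 m j = m.descFactorial j := by
  simp [degFall, ← descPochhammer_eval_eq_prod_range, descPochhammer_eval_eq_descFactorial]

theorem neg_one_pow_sub_of_le {n k : ℕ} (h : k ≤ n) :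
    (-1 : ℝ) ^ (n - k) = (-1) ^ n * (-1) ^ k := by
  obtain ⟨d, rfl⟩ := Nat.exists_eq_add_of_le h
  rw [Nat.add_sub_cancel_left, pow_add, mul_right_comm, ← mul_pow]
  norm_num

theorem sum_range_sum_range_succ_comm {M : Type*} [AddCommMonoid M] (f : ℕ → ℕ → M) (n : ℕ) :
    ∑ k ∈ range (n + 1), ∑ j ∈ range (k + 1), f k j
      = ∑ j ∈ range (n + 1), ∑ k ∈ Icc j n, f k j :=
  sum_comm' fun k j => by simp only [mem_range, mem_Icc]; omega

theorem eq_zero_of_sum_mul_degFall_one_eq_zero {n : ℕ} {c : ℕ → ℝ}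
    (h : ∀ z, ∑ j ∈ range (n + 1), c j * degFall 1 z j = 0) : ∀ m ≤ n, c m = 0 := by
  intro m
  induction m using Nat.strong_induction_on with
  | _ m ih =>
    intro hm
    -- at `z = m` the terms with `j > m` vanish, those with `j < m` by induction
    have heval := h m
    rw [sum_eq_single_of_mem m (mem_range.2 (by omega))] at heval
    · rw [degFall_one_natCast, Nat.descFactorial_self] at heval
      exact (mul_eq_zero.1 heval).resolve_right (by positivity)
    · intro j _ hne
      rcases lt_or_gt_of_ne hne with hlt | hgt
      · rw [ih j hlt (by omega), zero_mul]
      · rw [degFall_one_natCast, Nat.descFactorial_eq_zero_iff_lt.2 hgt, Nat.cast_zero, mul_zero]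

theorem degFall_one_eq_sum_S1_mul_S2
    (hS1 : ∀ (n : ℕ) (y : ℝ),
      degRise 1 (y + r) n = ∑ k ∈ range (n + 1), S1 n k * degRise lam y k)
    (hS2 : ∀ (n : ℕ) (y : ℝ),
      degFall lam (y + r) n = ∑ k ∈ range (n + 1), S2 n k * degFall 1 y k)
    (n : ℕ) (z : ℝ) :
    degFall 1 z n = ∑ j ∈ range (n + 1),
      (∑ k ∈ Icc j n, (-1 : ℝ) ^ (n - k) * S1 n k * S2 k j) * degFall 1 z j := by
  have h := hS1 n (-(z + r))
  rw [show -(z + r) + r = -z by ring, degRise_neg] at h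
  simp_rw [degRise_neg, hS2] at h
  calc degFall 1 z n = (-1) ^ n * ((-1) ^ n * degFall 1 z n) := by
        rw [← mul_assoc, ← mul_pow]; norm_num
    _ = ∑ k ∈ range (n + 1), ∑ j ∈ range (k + 1),
          (-1 : ℝ) ^ (n - k) * S1 n k * S2 k j * degFall 1 z j := by
        rw [h, mul_sum]
        refine sum_congr rfl fun k hk => ?_
        rw [neg_one_pow_sub_of_le (by rw [mem_range] at hk; omega), mul_sum, mul_sum, mul_sum]
        exact sum_congr rfl fun j _ => by ring
    _ = _ := by
        rw [sum_range_sum_range_succ_comm]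
        simp_rw [sum_mul]

theorem sum_neg_one_pow_mul_S1_mul_S2
    (hS1 : ∀ (n : ℕ) (y : ℝ),
      degRise 1 (y + r) n = ∑ k ∈ range (n + 1), S1 n k * degRise lam y k)
    (hS2 : ∀ (n : ℕ) (y : ℝ),
      degFall lam (y + r) n = ∑ k ∈ range (n + 1), S2 n k * degFall 1 y k)
    {n j : ℕ} (hj : j ≤ n) :
    ∑ k ∈ Icc j n, (-1 : ℝ) ^ (n - k) * S1 n k * S2 k j = if j = n then 1 else 0 := by
  refine sub_eq_zero.1 (eq_zero_of_sum_mul_degFall_one_eq_zero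
    (c := fun j => ∑ k ∈ Icc j n, (-1 : ℝ) ^ (n - k) * S1 n k * S2 k j - if j = n then 1 else 0)
    (fun z => ?_) j hj)
  simp_rw [sub_mul, sum_sub_distrib, ite_mul, one_mul, zero_mul, sum_ite_eq',
    if_pos (self_mem_range_succ n), ← degFall_one_eq_sum_S1_mul_S2 hS1 hS2, sub_self]

end

/-- With `F_{k,λ}(x|r) = ∑_{j=0}^{k} x^j j! {k+r,j+r}_{r,λ}` (the degenerate two variable
Fubini polynomial at `(x,r)`), we have
`x^n n! = ∑_{k=0}^{n} (−1)^{n−k} [n+r,k+r]_{r,λ} F_{k,λ}(x|r)`. -/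
theorem degenerate_fubini_identity (lam : ℝ) (r : ℕ) (x : ℝ) (S1 S2 : ℕ → ℕ → ℝ)
    (hS1 : ∀ (n : ℕ) (y : ℝ),
      degRise 1 (y + r) n = ∑ k ∈ range (n + 1), S1 n k * degRise lam y k)
    (hS2 : ∀ (n : ℕ) (y : ℝ),
      degFall lam (y + r) n = ∑ k ∈ range (n + 1), S2 n k * degFall 1 y k)
    (F : ℕ → ℝ)
    (hF : ∀ k : ℕ, F k = ∑ j ∈ range (k + 1), x ^ j * (Nat.factorial j : ℝ) * S2 k j) :
    ∀ n : ℕ, x ^ n * (Nat.factorial n : ℝ)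
      = ∑ k ∈ range (n + 1), (-1 : ℝ) ^ (n - k) * S1 n k * F k := by
  intro n
  calc x ^ n * (n.factorial : ℝ)
      = ∑ j ∈ range (n + 1), x ^ j * (j.factorial : ℝ) * (if j = n then 1 else 0) := by
        simp
    _ = ∑ j ∈ range (n + 1), ∑ k ∈ Icc j n,
          x ^ j * (j.factorial : ℝ) * ((-1 : ℝ) ^ (n - k) * S1 n k * S2 k j) := by
        refine sum_congr rfl fun j hj => ?_
        rw [← sum_neg_one_pow_mul_S1_mul_S2 hS1 hS2 (by rw [mem_range] at hj; omega), mul_sum]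
    _ = ∑ k ∈ range (n + 1), (-1 : ℝ) ^ (n - k) * S1 n k * F k := by
        rw [← sum_range_sum_range_succ_comm]
        refine sum_congr rfl fun k _ => ?_
        rw [hF, mul_sum]
        exact sum_congr rfl fun j _ => by ring
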